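/- Let A be a pre-associative algebra (operations * and juxtaposition) and let a(z), b(z), c(z) be pairwise mutually *-local and ≻-local formal distributions over A. Then for every n ∈ ℤ₊: (i) the pair (a(z), (b₍ₙ₎c)(z)) formed with the ≻-product is ≻-local; (ii) the pair (a(z), (b⁎₍ₙ₎c)(z)) formed with the *-n-product is both *-local and ≻-local; (iii) the pair ((a⁎₍ₙ₎b)(z), c(z)) is both *-local and ≻-local. -/

import Mathlib

variable {k A : Type*} [Field k] [CharZero k] [AddCommGroup A] [Module k A]

/-- `Σ_{s=0}^{N} (−1)^s C(N,s) op(x_{n−s}, y_{m+s})` for a bilinear operation `op`. -/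
def locSum (op : A →ₗ[k] A →ₗ[k] A) (x y : ℤ → A) (N : ℕ) (n m : ℤ) : A :=
  ∑ s ∈ Finset.range (N + 1),
    ((-1) ^ s * (N.choose s) : ℤ) • op (x (n - (s : ℤ))) (y (m + (s : ℤ)))

/-- Locality of the pair `(x(z), y(z))` with respect to the operation `op`. -/
def IsLocalPair (op : A →ₗ[k] A →ₗ[k] A) (x y : ℤ → A) : Prop :=
  ∃ N : ℕ, ∀ n m : ℤ, locSum op x y N n m = 0

/-- The `n`-th product with respect to the operation `op`:
`(x₍ₙ₎y)ₘ = Σ_{s≥0} (−1)^s C(n,s) op(x_{n−s}, y_{m+s})`. -/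
def nProd (op : A →ₗ[k] A →ₗ[k] A) (x y : ℤ → A) (n : ℕ) : ℤ → A :=
  fun m => locSum op x y n (n : ℤ) m


/-!
Index the coefficients of a distribution in three variables `z, u, w` by `(i, j, l) ∈ ℤ³`.
Shifting an index by one is multiplication by the corresponding variable, so locality of
`(x, y)` says that a power of `z - u` kills `x(z) y(u)`. For (i) and (ii), the pre-associativity
identities write `a(z) (b(u) c(w))` as a combination of products `(a(z) b(u)) c(w)`, which a
power of `z - u` kills, while `b`–`c` locality gives a power of `u - w` killing it. As
`z - w = (z - u) + (u - w)` and the two commute, a power of `z - w` kills it too, and this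
survives multiplication by `(u - w)^n` and the residue in `u` that form the `n`-th product.
For (iii), `(a(z) b(u)) c(w)` is rewritten as `a(z) (b(u) c(w))`, killed by a power of `u - w`,
which commutes with forming the `n`-th product in `z`.
-/

open Module Module.End fwdDiff_aux Finset

lemma Module.End.mem_maxGenEigenspace_zero_iff {R M : Type*} [CommRing R] [AddCommGroup M]
    [Module R M] {T : End R M} {m : M} :
    m ∈ T.maxGenEigenspace 0 ↔ ∃ N : ℕ, (T ^ N) m = 0 := by
  simp

section Shift

variable {M G : Type*} [AddCommMonoid M] [AddCommGroup G]

lemma commute_shiftₗ (u v : M) : Commute (shiftₗ M G u) (shiftₗ M G v) := by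
  ext f q
  simp only [mul_apply, shiftₗ_apply, add_right_comm]

lemma shiftₗ_sub_shiftₗ_pow_apply (u v : M) (N : ℕ) (f : M → G) (q : M) :
    ((shiftₗ M G u - shiftₗ M G v) ^ N) f q =
      ∑ s ∈ range (N + 1), ((-1) ^ s * N.choose s : ℤ) • f (q + s • v + (N - s) • u) := by
  rw [sub_eq_neg_add, ← neg_one_zsmul, ((commute_shiftₗ v u).smul_left (-1 : ℤ)).add_pow',
    Nat.sum_antidiagonal_eq_sum_range_succ_mk, LinearMap.sum_apply, Finset.sum_apply]
  refine sum_congr rfl fun s _ => ?_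
  rw [smul_pow, smul_mul_assoc, LinearMap.smul_apply, LinearMap.smul_apply, Pi.smul_apply,
    Pi.smul_apply, mul_apply, shiftₗ_pow_apply, shiftₗ_pow_apply, add_right_comm, mul_smul,
    natCast_zsmul, smul_comm]

end Shift

section ThreeVariables

variable (V : Type*) [AddCommGroup V]

/- On coefficients `F (i, j, l)` of a distribution in `z, u, w`, the shift along the first
(second, third) coordinate is multiplication by `z` (`u`, `w`). -/

def mulZSubU : End ℤ (ℤ × ℤ × ℤ → V) := shiftₗ _ V (1, 0, 0) - shiftₗ _ V (0, 1, 0)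

def mulUSubW : End ℤ (ℤ × ℤ × ℤ → V) := shiftₗ _ V (0, 1, 0) - shiftₗ _ V (0, 0, 1)

def mulZSubW : End ℤ (ℤ × ℤ × ℤ → V) := shiftₗ _ V (1, 0, 0) - shiftₗ _ V (0, 0, 1)

lemma mulZSubW_eq_add : mulZSubW V = mulZSubU V + mulUSubW V :=
  (sub_add_sub_cancel _ _ _).symm

lemma commute_mulZSubU_mulUSubW : Commute (mulZSubU V) (mulUSubW V) :=
  ((commute_shiftₗ _ _).sub_right (commute_shiftₗ _ _)).sub_left
    ((commute_shiftₗ _ _).sub_right (commute_shiftₗ _ _))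

lemma commute_mulZSubW_mulUSubW : Commute (mulZSubW V) (mulUSubW V) := by
  rw [mulZSubW_eq_add]
  exact (commute_mulZSubU_mulUSubW V).add_left (Commute.refl _)

variable {V}

lemma mulZSubU_pow_apply (N : ℕ) (F : ℤ × ℤ × ℤ → V) (i j l : ℤ) :
    (mulZSubU V ^ N) F (i, j, l) =
      ∑ s ∈ range (N + 1), ((-1) ^ s * N.choose s : ℤ) • F (i + N - s, j + s, l) := by
  rw [mulZSubU, shiftₗ_sub_shiftₗ_pow_apply]
  refine sum_congr rfl fun s hs => congrArg _ (congrArg F ?_)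
  have := mem_range_succ_iff.1 hs
  simp only [Prod.smul_mk, Prod.mk_add_mk, nsmul_eq_mul, mul_one, mul_zero, add_zero,
    Prod.mk.injEq, and_true]
  omega

lemma mulUSubW_pow_apply (N : ℕ) (F : ℤ × ℤ × ℤ → V) (i j l : ℤ) :
    (mulUSubW V ^ N) F (i, j, l) =
      ∑ s ∈ range (N + 1), ((-1) ^ s * N.choose s : ℤ) • F (i, j + N - s, l + s) := by
  rw [mulUSubW, shiftₗ_sub_shiftₗ_pow_apply]
  refine sum_congr rfl fun s hs => congrArg _ (congrArg F ?_)
  have := mem_range_succ_iff.1 hs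
  simp only [Prod.smul_mk, Prod.mk_add_mk, nsmul_eq_mul, mul_one, mul_zero, add_zero,
    Prod.mk.injEq, and_true, true_and]
  omega

lemma mulZSubW_pow_apply (N : ℕ) (F : ℤ × ℤ × ℤ → V) (i j l : ℤ) :
    (mulZSubW V ^ N) F (i, j, l) =
      ∑ s ∈ range (N + 1), ((-1) ^ s * N.choose s : ℤ) • F (i + N - s, j, l + s) := by
  rw [mulZSubW, shiftₗ_sub_shiftₗ_pow_apply]
  refine sum_congr rfl fun s hs => congrArg _ (congrArg F ?_)
  have := mem_range_succ_iff.1 hs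
  simp only [Prod.smul_mk, Prod.mk_add_mk, nsmul_eq_mul, mul_one, mul_zero, add_zero,
    Prod.mk.injEq, and_true]
  omega

end ThreeVariables

section Locality

variable {K V : Type*} [Field K] [AddCommGroup V] [Module K V]

def tripleLeft (op₁ op₂ : V →ₗ[K] V →ₗ[K] V) (x y w : ℤ → V) : ℤ × ℤ × ℤ → V :=
  fun q => op₁ (op₂ (x q.1) (y q.2.1)) (w q.2.2)

def tripleRight (op₁ op₂ : V →ₗ[K] V →ₗ[K] V) (x y w : ℤ → V) : ℤ × ℤ × ℤ → V :=
  fun q => op₁ (x q.1) (op₂ (y q.2.1) (w q.2.2))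

lemma locSum_nProd_right (op₁ op₂ : V →ₗ[K] V →ₗ[K] V) (a b c : ℤ → V) (M n : ℕ) (p q : ℤ) :
    locSum op₁ a (nProd op₂ b c n) M p q =
      ((mulZSubW V ^ M * mulUSubW V ^ n) (tripleRight op₁ op₂ a b c)) (p - M, 0, q) := by
  rw [mul_apply, mulZSubW_pow_apply]
  refine sum_congr rfl fun t _ => ?_
  rw [mulUSubW_pow_apply, nProd, locSum, map_sum, smul_sum, smul_sum]
  refine sum_congr rfl fun s _ => ?_
  simp only [tripleRight, map_zsmul]
  ring_nf

lemma locSum_nProd_left (op₁ op₂ : V →ₗ[K] V →ₗ[K] V) (a b c : ℤ → V) (M n : ℕ) (p q : ℤ) :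
    locSum op₁ (nProd op₂ a b n) c M p q =
      ((mulZSubU V ^ n * mulUSubW V ^ M) (tripleLeft op₁ op₂ a b c)) (0, p - M, q) := by
  rw [mul_apply, mulZSubU_pow_apply]
  simp only [locSum, nProd, map_sum, map_zsmul, LinearMap.sum_apply, LinearMap.smul_apply,
    smul_sum]
  rw [sum_comm]
  refine sum_congr rfl fun s _ => ?_
  rw [mulUSubW_pow_apply, smul_sum]
  refine sum_congr rfl fun t _ => ?_
  rw [smul_comm]
  simp only [tripleLeft]
  ring_nf

variable {op₁ op₂ : V →ₗ[K] V →ₗ[K] V} {a b c x y w : ℤ → V}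

lemma IsLocalPair.tripleLeft_mem_maxGenEigenspace (h : IsLocalPair op₂ x y) :
    tripleLeft op₁ op₂ x y w ∈ (mulZSubU V).maxGenEigenspace 0 := by
  obtain ⟨N, hN⟩ := h
  refine mem_maxGenEigenspace_zero_iff.2 ⟨N, funext fun ⟨i, j, l⟩ => ?_⟩
  simpa only [locSum, map_sum, map_zsmul, LinearMap.flip_apply, mulZSubU_pow_apply, tripleLeft,
    Pi.zero_apply, map_zero] using congrArg (op₁.flip (w l)) (hN (i + N) j)

lemma IsLocalPair.tripleRight_mem_maxGenEigenspace (h : IsLocalPair op₂ y w) :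
    tripleRight op₁ op₂ x y w ∈ (mulUSubW V).maxGenEigenspace 0 := by
  obtain ⟨N, hN⟩ := h
  refine mem_maxGenEigenspace_zero_iff.2 ⟨N, funext fun ⟨i, j, l⟩ => ?_⟩
  simpa only [locSum, map_sum, map_zsmul, mulUSubW_pow_apply, tripleRight, Pi.zero_apply,
    map_zero] using congrArg (op₁ (x i)) (hN (j + N) l)

theorem isLocalPair_nProd_right
    (hab : tripleRight op₁ op₂ a b c ∈ (mulZSubU V).maxGenEigenspace 0)
    (hbc : IsLocalPair op₂ b c) (n : ℕ) : IsLocalPair op₁ a (nProd op₂ b c n) := by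
  have hZW : tripleRight op₁ op₂ a b c ∈ (mulZSubW V).maxGenEigenspace 0 := by
    simpa only [add_zero, top_add, ← mulZSubW_eq_add] using
      genEigenspace_inf_le_add _ _ 0 0 ⊤ ⊤ (commute_mulZSubU_mulUSubW V)
        ⟨hab, hbc.tripleRight_mem_maxGenEigenspace⟩
  obtain ⟨M, hM⟩ := mem_maxGenEigenspace_zero_iff.1 hZW
  refine ⟨M, fun p q => ?_⟩
  rw [locSum_nProd_right, ((commute_mulZSubW_mulUSubW V).pow_pow M n).eq, mul_apply, hM,
    map_zero, Pi.zero_apply]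

theorem isLocalPair_nProd_left
    (habc : tripleLeft op₁ op₂ a b c ∈ (mulUSubW V).maxGenEigenspace 0) (n : ℕ) :
    IsLocalPair op₁ (nProd op₂ a b n) c := by
  obtain ⟨M, hM⟩ := mem_maxGenEigenspace_zero_iff.1 habc
  refine ⟨M, fun p q => ?_⟩
  rw [locSum_nProd_left, mul_apply, hM, map_zero, Pi.zero_apply]

end Locality

theorem stmt_15_general (st ju : A →ₗ[k] A →ₗ[k] A)
    (h1 : ∀ x y z : A, st (st x y) z = st x (st y z))
    (h2 : ∀ x y z : A, ju (st x y) z = ju x (ju y z))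
    (h3 : ∀ x y z : A, ju x (st y z) = st (ju x y) z + ju x (ju y z) - ju (ju x y) z)
    (a b c : ℤ → A)
    (habS : IsLocalPair st a b)
    (hbcS : IsLocalPair st b c)
    (habM : IsLocalPair ju a b)
    (hbcM : IsLocalPair ju b c) :
    ∀ n : ℕ,
      IsLocalPair ju a (nProd ju b c n) ∧
      (IsLocalPair st a (nProd st b c n) ∧ IsLocalPair ju a (nProd st b c n)) ∧
      (IsLocalPair st (nProd st a b n) c ∧ IsLocalPair ju (nProd st a b n) c) := by
  have hjuju : tripleRight ju ju a b c = tripleLeft ju st a b c :=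
    funext fun _ => (h2 _ _ _).symm
  have hstst : tripleRight st st a b c = tripleLeft st st a b c :=
    funext fun _ => (h1 _ _ _).symm
  have hjust : tripleRight ju st a b c =
      tripleLeft st ju a b c + tripleLeft ju st a b c - tripleLeft ju ju a b c := by
    funext q
    simp only [tripleLeft, tripleRight, Pi.add_apply, Pi.sub_apply, h3, h2]
  intro n
  refine ⟨?_, ⟨?_, ?_⟩, ?_, ?_⟩
  · exact isLocalPair_nProd_right (hjuju ▸ habS.tripleLeft_mem_maxGenEigenspace) hbcM n
  · exact isLocalPair_nProd_right (hstst ▸ habS.tripleLeft_mem_maxGenEigenspace) hbcS n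
  · refine isLocalPair_nProd_right ?_ hbcS n
    rw [hjust]
    exact sub_mem (add_mem habM.tripleLeft_mem_maxGenEigenspace
      habS.tripleLeft_mem_maxGenEigenspace) habM.tripleLeft_mem_maxGenEigenspace
  · exact isLocalPair_nProd_left (hstst ▸ hbcS.tripleRight_mem_maxGenEigenspace) n
  · exact isLocalPair_nProd_left (hjuju ▸ hbcM.tripleRight_mem_maxGenEigenspace) n

/-- Let `A` be a pre-associative (dendriform) algebra with operations `*` (`st`) and
juxtaposition (`ju`), and `a(z), b(z), c(z)` pairwise mutually `*`-local and `≻`-local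
formal distributions over `A`. Then for every `n ∈ ℤ₊`:
(i) `(a(z), (b₍ₙ₎c)(z))` is `≻`-local;
(ii) `(a(z), (b⁎₍ₙ₎c)(z))` is `*`-local and `≻`-local;
(iii) `((a⁎₍ₙ₎b)(z), c(z))` is `*`-local and `≻`-local. -/
theorem stmt_15 (st ju : A →ₗ[k] A →ₗ[k] A)
    (h1 : ∀ x y z : A, st (st x y) z = st x (st y z))
    (h2 : ∀ x y z : A, ju (st x y) z = ju x (ju y z))
    (h3 : ∀ x y z : A, ju x (st y z) = st (ju x y) z + ju x (ju y z) - ju (ju x y) z)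
    (a b c : ℤ → A)
    (habS : IsLocalPair st a b) (hbaS : IsLocalPair st b a)
    (hacS : IsLocalPair st a c) (hcaS : IsLocalPair st c a)
    (hbcS : IsLocalPair st b c) (hcbS : IsLocalPair st c b)
    (habM : IsLocalPair ju a b) (hbaM : IsLocalPair ju b a)
    (hacM : IsLocalPair ju a c) (hcaM : IsLocalPair ju c a)
    (hbcM : IsLocalPair ju b c) (hcbM : IsLocalPair ju c b) :
    ∀ n : ℕ,
      IsLocalPair ju a (nProd ju b c n) ∧
      (IsLocalPair st a (nProd st b c n) ∧ IsLocalPair ju a (nProd st b c n)) ∧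
      (IsLocalPair st (nProd st a b n) c ∧ IsLocalPair ju (nProd st a b n) c) :=
  stmt_15_general st ju h1 h2 h3 a b c habS hbcS habM hbcM
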